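/- arXiv:0909.0304 — 4 statements merged into one kernel-verified Lean document; each statement's English description precedes it below -/
import Mathlib

section
/- Let 𝔉 = 𝔉(X) be the free profinite group on a finite set X with |X| > 1. Then 𝔉 has trivial center. -/
set_option linter.unusedVariables false

namespace CSP

/-! ### The profinite completion of a discrete group -/

/-- The index set for the profinite completion: finite-index normal subgroups. -/
abbrev FinQuot (G : Type*) [Group G] : Type _ :=
  {N : Subgroup G // N.Normal ∧ N.FiniteIndex}

variable (G : Type*) [Group G]

instance (N : FinQuot G) : (N.1).Normal := N.2.1

instance (N : FinQuot G) : TopologicalSpace (G ⧸ N.1) := ⊥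

instance (N : FinQuot G) : DiscreteTopology (G ⧸ N.1) := ⟨rfl⟩

instance (N : FinQuot G) : IsTopologicalGroup (G ⧸ N.1) where
  continuous_mul := continuous_of_discreteTopology
  continuous_inv := continuous_of_discreteTopology

/-- The diagonal homomorphism from `G` into the product of all of its finite quotients. -/
def toFinQuots : G →* (∀ N : FinQuot G, G ⧸ N.1) :=
  Pi.monoidHom fun N => QuotientGroup.mk' N.1

/-- The profinite completion of `G` as a subgroup of the product of the finite
quotients of `G`: the closure of the image of the diagonal map. -/
def profSubgroup : Subgroup (∀ N : FinQuot G, G ⧸ N.1) :=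
  (toFinQuots G).range.topologicalClosure

/-- The profinite completion of a (discrete) group `G`, as a topological group.
For `G = F(X)` a free group on a finite set `X`, this is the free profinite group
`𝔉(X)` on `X`. -/
abbrev ProfComp : Type _ := ↥(profSubgroup G)

/-- The canonical homomorphism from `G` to its profinite completion.  For a free
group this is the embedding of `F(X)` into the free profinite group `𝔉(X)`. -/
def unit : G →* ProfComp G :=
  (toFinQuots G).codRestrict _ fun g =>
    Subgroup.le_topologicalClosure _ (MonoidHom.mem_range.2 ⟨g, rfl⟩)

/-! Let `z` be central and `π : F → Q = F ⧸ N` a finite quotient. Pick generators `x ≠ y` and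
let `φ : F → Q × Q` be `π` paired with `π` after killing `x`, so that `⟨φ x⟩ ∩ ⟨φ y⟩ = 1`. Lift
`φ` to the wreath product `C₂ ≀ (Q × Q)` by `t ↦ (δ₁, φ t)`; the image of `z` there is
represented by an element `(v, s)` commuting with `(δ₁, φ x)` and `(δ₁, φ y)`. Commuting with
`(δ₁, q)` means `q • v = v + δ_s - δ₁`; summing this over a right coset `K s` of a subgroup
`K ∋ q` gives `δ_s(K s) = δ₁(K s)`, i.e. `s ∈ K`. Hence `s ∈ ⟨φ x⟩ ∩ ⟨φ y⟩ = 1`, and as `s`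
lies over the `N`-coordinate of `z`, that coordinate is trivial. -/

variable {G}

theorem map_coord_of_le (z : ProfComp G) {M N : FinQuot G} (h : M.1 ≤ N.1) :
    QuotientGroup.map M.1 N.1 (MonoidHom.id G) h (z.1 M) = z.1 N := by
  have hclosed : IsClosed {f : ∀ N : FinQuot G, G ⧸ N.1 |
      QuotientGroup.map M.1 N.1 (MonoidHom.id G) h (f M) = f N} :=
    isClosed_eq (continuous_of_discreteTopology.comp (continuous_apply M)) (continuous_apply N)
  refine closure_minimal ?_ hclosed z.2
  rintro _ ⟨g, rfl⟩
  rfl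

theorem exists_rep_commute_of_mem_center {P : Type*} [Group P] [Finite P] {z : ProfComp G}
    (hz : z ∈ Subgroup.center (ProfComp G)) (ψ : G →* P) :
    ∃ h : G, (∀ g, Commute (ψ h) (ψ g)) ∧
      ∀ N : FinQuot G, ψ.ker ≤ N.1 → z.1 N = QuotientGroup.mk h := by
  let M : FinQuot G := ⟨ψ.ker, ψ.normal_ker, inferInstance⟩
  obtain ⟨h, hh⟩ := QuotientGroup.mk_surjective (z.1 M)
  refine ⟨h, fun g => ?_, fun N hN => ?_⟩
  · have hcoord : z.1 M * QuotientGroup.mk g = QuotientGroup.mk g * z.1 M :=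
      congrArg (fun t : ProfComp G => t.1 M) (Subgroup.mem_center_iff.mp hz (unit G g)).symm
    rw [← hh] at hcoord
    have hker := congrArg (QuotientGroup.kerLift ψ) hcoord
    rwa [map_mul, map_mul] at hker
  · rw [← map_coord_of_le z (M := M) hN, ← hh]
    rfl

instance {N K : Type*} [Group N] [Group K] [Finite N] [Finite K] {φ : K →* MulAut N} :
    Finite (N ⋊[φ] K) :=
  Finite.of_equiv _ SemidirectProduct.equivProd.symm

section Wreath

variable {H M : Type*} [Group H]

def translate [Group M] : H →* MulAut (H → M) where
  toFun q :=
    { toFun := fun f w => f (q⁻¹ * w)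
      invFun := fun f w => f (q * w)
      left_inv := fun f => by funext w; simp
      right_inv := fun f => by funext w; simp
      map_mul' := fun _ _ => rfl }
  map_one' := by ext; simp
  map_mul' _ _ := by ext; simp [mul_assoc]

theorem translate_apply [Group M] (q : H) (f : H → M) (w : H) :
    translate q f w = f (q⁻¹ * w) := rfl

theorem translate_mulSingle [Group M] [DecidableEq H] (q w : H) (m : M) :
    translate q (Pi.mulSingle w m) = Pi.mulSingle (q * w) m := by
  funext u
  simp only [translate_apply, Pi.mulSingle_apply, inv_mul_eq_iff_eq_mul]

theorem prod_translate_of_stable [CommGroup M] {S : Finset H} {q : H}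
    (hS : ∀ w, q * w ∈ S ↔ w ∈ S) (f : H → M) :
    ∏ w ∈ S, translate q f w = ∏ w ∈ S, f w :=
  Finset.prod_nbij' (q⁻¹ * ·) (q * ·) (fun w hw => (hS _).1 (by simpa using hw))
    (fun w hw => (hS w).2 hw) (fun _ _ => by simp) (fun _ _ => by simp) (fun _ _ => rfl)

theorem right_mem_of_commute [CommGroup M] [Finite H] [DecidableEq H] {m : M} (hm : m ≠ 1)
    {K : Subgroup H} {q : H} (hq : q ∈ K) {g : (H → M) ⋊[translate] H}
    (hg : Commute g ⟨Pi.mulSingle 1 m, q⟩) : g.right ∈ K := by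
  classical
  have : Fintype H := Fintype.ofFinite H
  let S : Finset H := {w | w * g.right⁻¹ ∈ K}
  have hS : ∀ w, q * w ∈ S ↔ w ∈ S := fun w => by
    simp only [S, Finset.mem_filter, Finset.mem_univ, true_and, mul_assoc]
    exact K.mul_mem_cancel_left hq
  have hleft := congrArg (fun f => ∏ w ∈ S, f w) (congrArg SemidirectProduct.left hg.eq)
  simp only [SemidirectProduct.mul_left, translate_mulSingle, mul_one, Pi.mul_apply,
    Finset.prod_mul_distrib, prod_translate_of_stable hS, Finset.prod_pi_mulSingle'] at hleft
  have hmem : g.right ∈ S := by simp [S]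
  rw [if_pos hmem, mul_comm] at hleft
  replace hleft := mul_right_cancel hleft
  have h1 : (1 : H) ∈ S := by
    by_contra h1
    exact hm (by rwa [if_neg h1] at hleft)
  simpa [S] using h1

end Wreath

theorem zpowers_inf_zpowers_diag_eq_bot {Q : Type*} [Group Q] (a b : Q) :
    Subgroup.zpowers ((a, 1) : Q × Q) ⊓ Subgroup.zpowers (b, b) = ⊥ := by
  rw [eq_bot_iff]
  rintro w ⟨ha, hb⟩
  have h2 : w.2 = 1 :=
    Subgroup.zpowers_le.2 (show (a, 1) ∈ (MonoidHom.snd Q Q).ker from rfl) ha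
  have h12 : w.1 = w.2 :=
    Subgroup.zpowers_le.2
      (show (b, b) ∈ (MonoidHom.fst Q Q).eqLocus (MonoidHom.snd Q Q) from rfl) hb
  exact Prod.ext (h12.trans h2) h2

section FreeGroup

variable {X H M : Type*} [Group H]

def eraseGen [DecidableEq X] (x : X) : FreeGroup X →* FreeGroup X :=
  FreeGroup.lift (Function.update FreeGroup.of x 1)

theorem eraseGen_of_self [DecidableEq X] (x : X) : eraseGen x (FreeGroup.of x) = 1 := by
  simp [eraseGen]

theorem eraseGen_of_ne [DecidableEq X] {x y : X} (h : y ≠ x) :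
    eraseGen x (FreeGroup.of y) = FreeGroup.of y := by
  simp [eraseGen, h]

variable [DecidableEq H] (φ : FreeGroup X →* H)

def wreathLift [Group M] (m : M) : FreeGroup X →* (H → M) ⋊[translate] H :=
  FreeGroup.lift fun t => ⟨Pi.mulSingle 1 m, φ (FreeGroup.of t)⟩

theorem wreathLift_of [Group M] (m : M) (t : X) :
    wreathLift φ m (FreeGroup.of t) = ⟨Pi.mulSingle 1 m, φ (FreeGroup.of t)⟩ :=
  FreeGroup.lift_apply_of

theorem wreathLift_right [Group M] (m : M) (g : FreeGroup X) :
    (wreathLift φ m g).right = φ g :=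
  DFunLike.congr_fun (show SemidirectProduct.rightHom.comp (wreathLift φ m) = φ from
    FreeGroup.ext_hom _ _ fun t => by simp [wreathLift_of]) g

theorem ker_wreathLift_le [Group M] (m : M) : (wreathLift φ m).ker ≤ φ.ker := fun g hg => by
  rw [MonoidHom.mem_ker, ← wreathLift_right φ m, MonoidHom.mem_ker.mp hg,
    SemidirectProduct.one_right]

theorem mem_zpowers_of_commute_wreathLift [CommGroup M] [Finite H] {m : M} (hm : m ≠ 1)
    {g : FreeGroup X} {t : X} (h : Commute (wreathLift φ m g) (wreathLift φ m (.of t))) :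
    φ g ∈ Subgroup.zpowers (φ (.of t)) := by
  rw [wreathLift_of] at h
  simpa only [wreathLift_right] using right_mem_of_commute hm (Subgroup.mem_zpowers _) h

end FreeGroup

theorem freeProfinite_center_trivial_general (X : Type) (hX : 1 < Nat.card X) :
    Subgroup.center (ProfComp (FreeGroup X)) = ⊥ := by
  classical
  have : Finite X := Nat.finite_of_card_ne_zero (by omega)
  obtain ⟨x, y, hxy⟩ := (Finite.one_lt_card_iff_nontrivial.mp hX).exists_pair_ne
  refine (Subgroup.eq_bot_iff_forall _).2 fun z hz => Subtype.ext <| funext fun N => ?_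
  have : N.1.FiniteIndex := N.2.2
  let π := QuotientGroup.mk' N.1
  let φ := π.prod (π.comp (eraseGen x))
  let ψ := wreathLift φ (Multiplicative.ofAdd (1 : ZMod 2))
  obtain ⟨h, hcomm, hrep⟩ := exists_rep_commute_of_mem_center hz ψ
  have hφ : φ (.of x) = (π (.of x), 1) ∧ φ (.of y) = (π (.of y), π (.of y)) := by
    simp [φ, eraseGen_of_self, eraseGen_of_ne hxy.symm]
  have hφh : φ h = 1 := by
    have hmem : φ h ∈ Subgroup.zpowers (φ (.of x)) ⊓ Subgroup.zpowers (φ (.of y)) :=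
      ⟨mem_zpowers_of_commute_wreathLift φ (by decide) (hcomm (.of x)),
        mem_zpowers_of_commute_wreathLift φ (by decide) (hcomm (.of y))⟩
    rwa [hφ.1, hφ.2, zpowers_inf_zpowers_diag_eq_bot, Subgroup.mem_bot] at hmem
  have hker : ψ.ker ≤ N.1 := calc
    ψ.ker ≤ φ.ker := ker_wreathLift_le φ _
    _ ≤ π.ker := (MonoidHom.ker_prod π (π.comp (eraseGen x))).le.trans inf_le_left
    _ = N.1 := QuotientGroup.ker_mk' N.1
  rw [hrep N hker]
  exact congrArg Prod.fst hφh

/-- Corollary 2.3 (second part): the free profinite group `𝔉(X)` on a finite set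
`X` with `|X| > 1` has trivial center. -/
theorem freeProfinite_center_trivial (X : Type) [Finite X] (hX : 1 < Nat.card X) :
    Subgroup.center (ProfComp (FreeGroup X)) = ⊥ :=
  freeProfinite_center_trivial_general X hX

end CSP
end

section
/- Let F = F(X) be the free group on X = {x₁, …, xₙ} with n > 1, and let G = F/N be a finite quotient of F. Pick a prime p not dividing 6·|G|, and set L = N ∩ F⁶[F, F] and M = Lᵖ[L, L]. Let δ : F/M → F/L be the canonical homomorphism. Then for c = [x_i, x_j] = x_i x_j x_i⁻¹ x_j⁻¹ with i ≠ j, one has δ(C_{F/M}(cM)) = ⟨cL⟩. -/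
/-!
Let `Q = F/L` and send `w ∈ F` to `Φ(w) = (∂w/∂x_j, wL)` in the semidirect product `𝔽_p[Q] ⋊ Q`,
where `∂/∂x_j` is the Fox derivative. This is a homomorphism, and it kills `M = Lᵖ[L,L]` because it
maps `L` into the abelian group `𝔽_p[Q]` of exponent `p`. For `c = [x_i, x_j]` one has
`∂c/∂x_j = x_i - c`. So if `yM` commutes with `cM`, then comparing `𝔽_p[Q]`-components of
`Φ(y)Φ(c) = Φ(c)Φ(y)` gives `u + q(x_i - c) = (x_i - c) + cu` with `q = yL`. Summing the
coefficients over the subgroup `C = ⟨cL⟩` cancels `u` against `cu`. Since `x_iL ∉ C` (already in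
`F/F⁶[F,F] ≅ (ℤ/6)ⁿ`, `x_i` is nontrivial and `c` is trivial), the sum is `ε = -1` with `ε ∈ {0, 1}`
when `q ∉ C`, which is impossible in `𝔽_p` for odd `p`.
-/

namespace CSP

variable {F : Type*} [Group F]

/-- The subgroup `Nᵖ[N,N]` generated by all `p`-th powers of elements of `N`
together with the commutator subgroup `[N,N]`. -/
def powCommSubgroup (p : ℕ) (N : Subgroup F) : Subgroup F :=
  Subgroup.closure ((· ^ p) '' (N : Set F)) ⊔ ⁅N, N⁆

lemma powCommSubgroup_le (p : ℕ) (N : Subgroup F) : powCommSubgroup p N ≤ N := by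
  apply sup_le
  · rw [Subgroup.closure_le]
    rintro _ ⟨x, hx, rfl⟩
    exact N.pow_mem hx p
  · refine Subgroup.commutator_le.2 fun a ha b hb => ?_
    rw [commutatorElement_def]
    exact N.mul_mem (N.mul_mem (N.mul_mem ha hb) (N.inv_mem ha)) (N.inv_mem hb)

instance powCommSubgroup_normal (p : ℕ) (N : Subgroup F) [hN : N.Normal] :
    (powCommSubgroup p N).Normal := by
  have h1 : (Subgroup.closure ((· ^ p) '' (N : Set F))).Normal := by
    constructor
    intro n hn g
    have hmap : Subgroup.map (MulAut.conj g).toMonoidHom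
        (Subgroup.closure ((· ^ p) '' (N : Set F)))
        ≤ Subgroup.closure ((· ^ p) '' (N : Set F)) := by
      rw [MonoidHom.map_closure]
      apply Subgroup.closure_mono
      rintro _ ⟨_, ⟨x, hx, rfl⟩, rfl⟩
      exact ⟨g * x * g⁻¹, hN.conj_mem x hx g, by simp [conj_pow, MulAut.conj_apply]⟩
    exact hmap ⟨n, hn, rfl⟩
  haveI := h1
  unfold powCommSubgroup
  infer_instance

open scoped commutatorElement

theorem powCommSubgroup_le_ker {H : Type*} [Group H] (f : F →* H) {p : ℕ} {L : Subgroup F}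
    (hcomm : ∀ a ∈ L, ∀ b ∈ L, Commute (f a) (f b)) (hpow : ∀ a ∈ L, f a ^ p = 1) :
    powCommSubgroup p L ≤ f.ker := by
  refine sup_le ?_ (Subgroup.commutator_le.2 fun a ha b hb => ?_)
  · rw [Subgroup.closure_le]
    rintro _ ⟨a, ha, rfl⟩
    rw [SetLike.mem_coe, MonoidHom.mem_ker, map_pow]
    exact hpow a ha
  · rw [MonoidHom.mem_ker, map_commutatorElement, commutatorElement_eq_one_iff_commute]
    exact hcomm a ha b hb

theorem map_of_notMem_zpowers_map_commutator {α Q : Type*} [Group Q] {m : ℕ} (hm : m ≠ 1)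
    {π : FreeGroup α →* Q} (hπ : π.ker ≤ powCommSubgroup m ⊤) (i : α) (a b : FreeGroup α) :
    π (.of i) ∉ Subgroup.zpowers (π ⁅a, b⁆) := by
  classical
  let ψ : FreeGroup α →* Multiplicative (ZMod m) :=
    FreeGroup.lift fun k => .ofAdd (if k = i then 1 else 0)
  have hψ : π.ker ≤ ψ.ker := hπ.trans <| powCommSubgroup_le_ker ψ
    (fun _ _ _ _ => Commute.all _ _)
    (fun x _ => by rw [← toAdd_eq_zero, toAdd_pow, ← Nat.cast_smul_eq_nsmul (ZMod m),
      ZMod.natCast_self, zero_smul])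
  rintro ⟨k, hk⟩
  have hker : (FreeGroup.of i)⁻¹ * ⁅a, b⁆ ^ k ∈ ψ.ker :=
    hψ <| (π.eq_iff).1 (by rw [map_zpow]; exact hk)
  rw [MonoidHom.mem_ker, map_mul, map_inv, map_zpow, map_commutatorElement,
    commutatorElement_eq_one_iff_commute.2 (Commute.all _ _), one_zpow, mul_one, inv_eq_one,
    FreeGroup.lift_apply_of, if_pos rfl, ofAdd_eq_one] at hker
  exact hm ((ZMod.natCast_eq_zero_iff 1 m).1 (by exact_mod_cast hker) |> Nat.dvd_one.1)

section GroupAlgebra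

open MonoidAlgebra

variable {R Q : Type*} [Ring R] [Group Q]

open Classical in
noncomputable def coeffSumOn (C : Subgroup Q) : MonoidAlgebra R Q →+ R :=
  (Finsupp.liftAddHom fun g => if g ∈ C then AddMonoidHom.id R else 0).comp
    coeffAddEquiv.toAddMonoidHom

theorem coeffSumOn_single (C : Subgroup Q) (g : Q) (r : R) [Decidable (g ∈ C)] :
    coeffSumOn C (single g r) = if g ∈ C then r else 0 := by
  by_cases hg : g ∈ C <;> simp [coeffSumOn, hg]

theorem coeffSumOn_single_mul {C : Subgroup Q} {c : Q} (hc : c ∈ C) (u : MonoidAlgebra R Q) :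
    coeffSumOn C (single c 1 * u) = coeffSumOn C u := by
  classical
  induction u using MonoidAlgebra.induction_linear with
  | zero => simp
  | add u v hu hv => rw [mul_add, map_add, map_add, hu, hv]
  | single g r => rw [single_mul_single, one_mul, coeffSumOn_single, coeffSumOn_single,
      Subgroup.mul_mem_cancel_left C hc]

theorem mem_of_add_single_mul_eq {C : Subgroup Q} {c g q : Q} (hc : c ∈ C) (hg : g ∉ C)
    (h2 : (2 : R) ≠ 0) {u : MonoidAlgebra R Q}
    (h : u + single q 1 * (single g 1 - single c 1) = single g 1 - single c 1 + single c 1 * u) :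
    q ∈ C := by
  classical
  by_contra hq
  have hqc : q * c ∉ C := fun h => hq (by simpa using C.mul_mem h (C.inv_mem hc))
  have := congrArg (coeffSumOn C) h
  rw [map_add, map_add, coeffSumOn_single_mul hc, mul_sub, single_mul_single, single_mul_single,
    map_sub, map_sub, coeffSumOn_single, coeffSumOn_single, coeffSumOn_single,
    coeffSumOn_single, if_neg hg, if_pos hc, if_neg hqc] at this
  replace := add_left_cancel (this.trans (add_comm _ _))
  split_ifs at this
  · exact h2 (by simpa [eq_neg_iff_add_eq_zero, one_add_one_eq_two] using this)
  · exact h2 (by rw [← one_add_one_eq_two, (by simpa using this : (1 : R) = 0), add_zero])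

end GroupAlgebra

section Fox

open MonoidAlgebra SemidirectProduct

variable (R : Type*) [Ring R]

noncomputable def leftRegularAut (Q : Type*) [Group Q] :
    Q →* MulAut (Multiplicative (MonoidAlgebra R Q)) :=
  (MulAutMultiplicative _).symm.toMonoidHom.comp
    (AddAut.mulLeft.comp (MonoidAlgebra.of R Q).toHomUnits)

theorem leftRegularAut_apply {Q : Type*} [Group Q] (q : Q)
    (a : Multiplicative (MonoidAlgebra R Q)) :
    leftRegularAut R Q q a = .ofAdd (single q 1 * a.toAdd) := rfl

theorem leftRegularAut_symm_apply {Q : Type*} [Group Q] (q : Q)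
    (a : Multiplicative (MonoidAlgebra R Q)) :
    (leftRegularAut R Q q).symm a = .ofAdd (single q⁻¹ 1 * a.toAdd) := rfl

variable {α Q : Type*} [DecidableEq α] [Group Q]

-- The `MonoidAlgebra` component of `foxHom R π j w` is the image under `π` of the Fox derivative
-- `∂w/∂x_j`: the map `w ↦ (∂w/∂x_j, π w)` is multiplicative by the Fox product rule.
noncomputable def foxHom (π : FreeGroup α →* Q) (j : α) :
    FreeGroup α →* Multiplicative (MonoidAlgebra R Q) ⋊[leftRegularAut R Q] Q :=
  FreeGroup.lift fun k => ⟨.ofAdd (if k = j then 1 else 0), π (.of k)⟩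

variable {R}

theorem foxHom_right (π : FreeGroup α →* Q) (j : α) (w : FreeGroup α) :
    (foxHom R π j w).right = π w := by
  have : rightHom.comp (foxHom R π j) = π := FreeGroup.ext_hom _ _ fun k => by simp [foxHom]
  exact DFunLike.congr_fun this w

theorem powCommSubgroup_ker_le_ker_foxHom {p : ℕ} (hp : (p : R) = 0) (π : FreeGroup α →* Q)
    (j : α) : powCommSubgroup p π.ker ≤ (foxHom R π j).ker := by
  have hinl : ∀ a ∈ π.ker, foxHom R π j a = inl (foxHom R π j a).left := fun a ha => by
    conv_lhs => rw [← inl_left_mul_inr_right (foxHom R π j a), foxHom_right, ha, map_one, mul_one]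
  refine powCommSubgroup_le_ker _ (fun a ha b hb => ?_) (fun a ha => ?_)
  · rw [hinl a ha, hinl b hb]
    exact (Commute.all _ _).map inl
  · have : (foxHom R π j a).left ^ p = 1 := by
      rw [← toAdd_eq_zero, toAdd_pow, ← Nat.cast_smul_eq_nsmul R, hp, zero_smul]
    rw [hinl a ha, ← map_pow, this, map_one]

theorem foxHom_commutator_left {i j : α} (hij : i ≠ j) (π : FreeGroup α →* Q) :
    (foxHom R π j ⁅FreeGroup.of i, FreeGroup.of j⁆).left.toAdd =
      single (π (FreeGroup.of i)) 1 - single (π ⁅FreeGroup.of i, FreeGroup.of j⁆) 1 := by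
  simp [commutatorElement_def, foxHom, mul_left, inv_left, leftRegularAut_apply,
    leftRegularAut_symm_apply, hij, single_mul_single, sub_eq_add_neg, mul_add, mul_assoc]

theorem mem_zpowers_of_commute_foxHom (h2 : (2 : R) ≠ 0) {i j : α} (hij : i ≠ j)
    {π : FreeGroup α →* Q}
    (hi : π (.of i) ∉ Subgroup.zpowers (π ⁅FreeGroup.of i, FreeGroup.of j⁆)) {y : FreeGroup α}
    (hy : Commute (foxHom R π j y) (foxHom R π j ⁅FreeGroup.of i, FreeGroup.of j⁆)) :
    π y ∈ Subgroup.zpowers (π ⁅FreeGroup.of i, FreeGroup.of j⁆) := by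
  have h := congrArg (fun x => x.left.toAdd) hy.eq
  simp only [mul_left, toAdd_mul, leftRegularAut_apply, toAdd_ofAdd, foxHom_right,
    foxHom_commutator_left hij] at h
  exact mem_of_add_single_mul_eq (Subgroup.mem_zpowers _) hi h2 h

end Fox

/-- Lemma 2.6: let `F` be the free group on `n > 1` generators, `G = F/N` a finite
quotient, `p` a prime not dividing `6|G|`, `L = N ∩ F⁶[F,F]`, `M = Lᵖ[L,L]` and
`δ : F/M → F/L` the canonical homomorphism.  Then for `c = [xᵢ, xⱼ]` with `i ≠ j`,
the image under `δ` of the centralizer of `cM` in `F/M` is the cyclic subgroup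
`⟨cL⟩`. -/
theorem centralizer_commutator_image_eq_cyclic
    (n : ℕ) (N : Subgroup (FreeGroup (Fin n))) [N.Normal]
    (p : ℕ) (hpG : ¬ p ∣ 6 * Nat.card (FreeGroup (Fin n) ⧸ N))
    (i j : Fin n) (hij : i ≠ j) :
    Subgroup.map
      (QuotientGroup.map
        (powCommSubgroup p (N ⊓ powCommSubgroup 6 (⊤ : Subgroup (FreeGroup (Fin n)))))
        (N ⊓ powCommSubgroup 6 (⊤ : Subgroup (FreeGroup (Fin n))))
        (MonoidHom.id (FreeGroup (Fin n)))
        (by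
          simpa using powCommSubgroup_le p
            (N ⊓ powCommSubgroup 6 (⊤ : Subgroup (FreeGroup (Fin n))))))
      (Subgroup.centralizer
        {((FreeGroup.of i * FreeGroup.of j * (FreeGroup.of i)⁻¹ * (FreeGroup.of j)⁻¹ :
            FreeGroup (Fin n)) :
            FreeGroup (Fin n) ⧸
              powCommSubgroup p
                (N ⊓ powCommSubgroup 6 (⊤ : Subgroup (FreeGroup (Fin n)))))})
    = Subgroup.zpowers
        ((FreeGroup.of i * FreeGroup.of j * (FreeGroup.of i)⁻¹ * (FreeGroup.of j)⁻¹ :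
            FreeGroup (Fin n)) :
          FreeGroup (Fin n) ⧸
            (N ⊓ powCommSubgroup 6 (⊤ : Subgroup (FreeGroup (Fin n))))) := by
  set L := N ⊓ powCommSubgroup 6 (⊤ : Subgroup (FreeGroup (Fin n)))
  have h2 : (2 : ZMod p) ≠ 0 := by
    rw [← Nat.cast_two, ne_eq, ZMod.natCast_eq_zero_iff]
    exact fun h => hpG (h.trans ((by norm_num : 2 ∣ 6).mul_right _))
  let Φ := foxHom (ZMod p) (QuotientGroup.mk' L) j
  have hM : powCommSubgroup p L ≤ Φ.ker := by
    simpa using powCommSubgroup_ker_le_ker_foxHom (ZMod.natCast_self p) (QuotientGroup.mk' L) j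
  apply le_antisymm
  · rintro _ ⟨z, hz, rfl⟩
    obtain ⟨y, rfl⟩ := QuotientGroup.mk_surjective z
    have hyc : Commute (Φ y) (Φ ⁅FreeGroup.of i, FreeGroup.of j⁆) := by
      have := congrArg (QuotientGroup.lift _ Φ hM) (Subgroup.mem_centralizer_singleton_iff.1 hz)
      rwa [map_mul, map_mul, QuotientGroup.lift_mk, QuotientGroup.lift_mk] at this
    exact mem_zpowers_of_commute_foxHom h2 hij
      (map_of_notMem_zpowers_map_commutator (m := 6) (by norm_num)
        ((QuotientGroup.ker_mk' L).trans_le inf_le_right) i _ _) hyc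
  · rw [Subgroup.zpowers_le]
    exact ⟨_, Subgroup.mem_centralizer_singleton_iff.2 rfl, rfl⟩

end CSP
end

section
/- Let 𝔉 = 𝔉(X) be the free profinite group on a finite set X with |X| > 1. Given distinct x, y ∈ X and c = [x, y] = xyx⁻¹y⁻¹, the centralizer C_𝔉(c) coincides with the closure in 𝔉 of the cyclic subgroup ⟨c⟩. -/
set_option linter.unusedVariables false

namespace CSP

variable (G : Type*) [Group G]

/-
The closure of `⟨c⟩` lies in the centralizer because centralizers are closed. Conversely, by
density of `F` in `𝔉` it suffices to find, for each finite-index normal subgroup `N` of `F`, a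
finite-index normal subgroup `M` such that every `w` commuting with `c` modulo `M` lies in `⟨c⟩N`.
Pass to the finite quotient `H = F/K`, with `K ≤ N` chosen (via the parity of the exponent sum of
`y`) so that `y ∉ ⟨c⟩K`, and let `F` act on `H × ℤ/3` through the wreath product `ℤ/3 ≀ H`, the
generator `x` carrying the voltage `δ₁`. Then `c` acts as `(t, δ_p - δ_q)` where `t` is the image
of `c` and `⟨t⟩p ≠ ⟨t⟩q`. If `(s, f)` commutes with it, `s` commutes with `t` and the sums of
`δ_p - δ_q` over `⟨t⟩`-orbits, i.e. the function `1_{⟨t⟩p} - 1_{⟨t⟩q}`, are invariant under left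
multiplication by `s`; evaluating at `p` forces `s ∈ ⟨t⟩`. Take `M` to be the kernel of the action.
-/

open scoped commutatorElement

theorem mem_closure_pi_discrete_iff {ι : Type*} {A : ι → Type*} [∀ i, TopologicalSpace (A i)]
    [∀ i, DiscreteTopology (A i)] {S : Set (∀ i, A i)} {p : ∀ i, A i} :
    p ∈ closure S ↔ ∀ I : Finset ι, ∃ s ∈ S, ∀ i ∈ I, s i = p i := by
  simp_rw [mem_closure_iff_nhds, nhds_pi, nhds_discrete, Filter.mem_pi', Filter.mem_pure]
  constructor
  · intro h I
    obtain ⟨s, hsI, hsS⟩ :=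
      h ((I : Set ι).pi fun i => {p i}) ⟨I, fun i => {p i}, fun i => rfl, subset_rfl⟩
    exact ⟨s, hsS, hsI⟩
  · rintro h t ⟨I, u, hu, hIt⟩
    obtain ⟨s, hsS, hs⟩ := h I
    exact ⟨s, hIt fun i hi => hs i hi ▸ hu i, hsS⟩

section ProfComp

variable {G}

theorem unit_apply (g : G) (N : FinQuot G) : (unit G g).1 N = (g : G ⧸ N.1) := rfl

theorem exists_unit_eqOn (p : ProfComp G) (I : Finset (FinQuot G)) :
    ∃ g : G, ∀ N ∈ I, (unit G g).1 N = p.1 N := by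
  obtain ⟨-, ⟨g, rfl⟩, hg⟩ := mem_closure_pi_discrete_iff.1 (p.2 : p.1 ∈ profSubgroup G) I
  exact ⟨g, hg⟩

theorem mem_closure_of_forall_finset {S : Set (ProfComp G)} {p : ProfComp G}
    (h : ∀ I : Finset (FinQuot G), ∃ s ∈ S, ∀ N ∈ I, s.1 N = p.1 N) : p ∈ closure S := by
  refine closure_subtype.2 (mem_closure_pi_discrete_iff.2 fun I => ?_)
  obtain ⟨s, hs, hsp⟩ := h I
  exact ⟨s, ⟨s, hs, rfl⟩, hsp⟩

def FinQuot.finsetInf (I : Finset (FinQuot G)) : FinQuot G :=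
  ⟨⨅ N ∈ I, N.1, Subgroup.normal_iInf_normal fun N => Subgroup.normal_iInf_normal fun _ => N.2.1,
    Subgroup.finiteIndex_iInf' _ fun N _ => N.2.2⟩

theorem FinQuot.finsetInf_le {I : Finset (FinQuot G)} {N : FinQuot G} (hN : N ∈ I) :
    (FinQuot.finsetInf I).1 ≤ N.1 :=
  iInf₂_le N hN

/-- Minasyan's centralizer condition for `c`, in the case where the centralizer of `c` is `⟨c⟩`. -/
def ZPowersCentralizerCondition (c : G) : Prop :=
  ∀ N : FinQuot G, ∃ M : FinQuot G, ∀ w : G, ⁅c, w⁆ ∈ M.1 → ∃ k : ℤ, (c ^ k)⁻¹ * w ∈ N.1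

theorem centralizer_unit_eq_closure_zpowers {c : G} (hc : ZPowersCentralizerCondition c) :
    Subgroup.centralizer {unit G c} = (Subgroup.zpowers (unit G c)).topologicalClosure := by
  classical
  refine le_antisymm (fun h hh => ?_) ?_
  · refine mem_closure_of_forall_finset fun I => ?_
    obtain ⟨M, hM⟩ := hc (FinQuot.finsetInf I)
    obtain ⟨g, hg⟩ := exists_unit_eqOn h (insert M I)
    have hcg : ⁅c, g⁆ ∈ M.1 := by
      have hcomm : Commute ((unit G c).1 M) (h.1 M) :=
        (congrArg (fun z : ProfComp G => z.1 M) (Subgroup.mem_centralizer_singleton_iff.1 hh)).symm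
      rw [← QuotientGroup.eq_one_iff, ← QuotientGroup.mk'_apply, map_commutatorElement,
        commutatorElement_eq_one_iff_commute]
      rwa [← hg M (Finset.mem_insert_self _ _)] at hcomm
    obtain ⟨k, hk⟩ := hM g hcg
    refine ⟨unit G c ^ k, Subgroup.zpow_mem_zpowers _ _, fun N hN => ?_⟩
    rw [← hg N (Finset.mem_insert_of_mem hN), ← map_zpow, unit_apply, unit_apply, QuotientGroup.eq]
    exact FinQuot.finsetInf_le hN hk
  · exact Subgroup.topologicalClosure_minimal _
      (Subgroup.zpowers_le.2 (Subgroup.mem_centralizer_singleton_iff.2 rfl))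
      (Set.isClosed_centralizer _)

end ProfComp

section WreathPerm

variable {H A : Type*} [Group H] [AddCommGroup A]

def wreathPerm (m : H) (v : H → A) : Equiv.Perm (H × A) where
  toFun p := (m * p.1, p.2 + v p.1)
  invFun p := (m⁻¹ * p.1, p.2 - v (m⁻¹ * p.1))
  left_inv p := by simp
  right_inv p := by simp

theorem wreathPerm_mul (m m' : H) (v v' : H → A) :
    wreathPerm m v * wreathPerm m' v' = wreathPerm (m * m') (fun g => v' g + v (m' * g)) := by
  ext p <;> simp [wreathPerm, mul_assoc, add_assoc]

theorem wreathPerm_one : wreathPerm (1 : H) (0 : H → A) = 1 := by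
  ext p <;> simp [wreathPerm]

theorem wreathPerm_inv (m : H) (v : H → A) :
    (wreathPerm m v)⁻¹ = wreathPerm m⁻¹ (fun g => -v (m⁻¹ * g)) := by
  ext p <;> simp [wreathPerm, sub_eq_add_neg]

theorem wreathPerm_inj {m m' : H} {v v' : H → A} :
    wreathPerm m v = wreathPerm m' v' ↔ m = m' ∧ v = v' := by
  refine ⟨fun h => ⟨?_, funext fun g => ?_⟩, fun h => h.1 ▸ h.2 ▸ rfl⟩
  · simpa [wreathPerm] using congrArg Prod.fst (Equiv.congr_fun h (1, 0))
  · simpa [wreathPerm] using congrArg Prod.snd (Equiv.congr_fun h (g, 0))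

theorem commute_wreathPerm_iff {t s : H} {e f : H → A} :
    Commute (wreathPerm t e) (wreathPerm s f) ↔
      Commute t s ∧ ∀ g, f g + e (s * g) = e g + f (t * g) := by
  rw [Commute, SemiconjBy, wreathPerm_mul, wreathPerm_mul, wreathPerm_inj, funext_iff]
  rfl

theorem exists_lift_wreathPerm_eq {X : Type*} (π : FreeGroup X →* H) (v : X → H → A)
    (w : FreeGroup X) :
    ∃ f, FreeGroup.lift (fun t => wreathPerm (π (.of t)) (v t)) w = wreathPerm (π w) f := by
  induction w using FreeGroup.induction_on with
  | C1 => exact ⟨0, by rw [map_one, map_one, wreathPerm_one]⟩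
  | of t => exact ⟨v t, FreeGroup.lift_apply_of⟩
  | inv_of t ih =>
    obtain ⟨f, hf⟩ := ih
    exact ⟨_, by rw [map_inv, map_inv, hf, wreathPerm_inv]⟩
  | mul u w hu hw =>
    obtain ⟨fu, hfu⟩ := hu
    obtain ⟨fw, hfw⟩ := hw
    exact ⟨_, by rw [map_mul, map_mul, hfu, hfw, wreathPerm_mul]⟩

theorem commutatorElement_wreathPerm_single [DecidableEq H] {R : Type*} [AddCommGroupWithOne R]
    (a b : H) :
    ⁅wreathPerm a (Pi.single 1 1 : H → R), wreathPerm b (0 : H → R)⁆ =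
      wreathPerm ⁅a, b⁆ (Pi.single (b * a * b⁻¹) 1 - Pi.single (b * a) 1) := by
  simp only [commutatorElement_def, wreathPerm_inv, wreathPerm_mul]
  congr 1
  funext g
  simp [Pi.single_apply, mul_eq_one_iff_eq_inv', inv_mul_eq_iff_eq_mul, sub_eq_neg_add, mul_assoc]

end WreathPerm

theorem sum_range_orderOf_pow_mul_mul_eq {H A : Type*} [Monoid H] [AddCommGroup A] {t s : H}
    {e f : H → A} (hts : Commute t s) (hef : ∀ g, f g + e (s * g) = e g + f (t * g)) (g : H) :
    ∑ k ∈ Finset.range (orderOf t), e (t ^ k * (s * g)) =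
      ∑ k ∈ Finset.range (orderOf t), e (t ^ k * g) := by
  have hterm : ∀ k, e (t ^ k * (s * g)) =
      e (t ^ k * g) + (f (t ^ (k + 1) * g) - f (t ^ k * g)) := by
    intro k
    rw [← mul_assoc, (hts.pow_left k).eq, mul_assoc, pow_succ', mul_assoc, ← add_sub_assoc,
      ← hef, add_sub_cancel_left]
  rw [Finset.sum_congr rfl fun k _ => hterm k, Finset.sum_add_distrib,
    Finset.sum_range_sub (fun k => f (t ^ k * g)), pow_orderOf_eq_one, pow_zero, sub_self,
    add_zero]

theorem sum_range_orderOf_single_pow_mul_eq_indicator {H R : Type*} [Group H] [DecidableEq H]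
    [AddCommMonoidWithOne R] {t : H} (ht : IsOfFinOrder t) (p g : H) :
    ∑ k ∈ Finset.range (orderOf t), (Pi.single p 1 : H → R) (t ^ k * g) =
      (Subgroup.zpowers t : Set H).indicator 1 (p * g⁻¹) := by
  classical
  simp_rw [Pi.single_apply, ← eq_mul_inv_iff_mul_eq]
  rw [← Finset.sum_image (f := fun h => if h = p * g⁻¹ then (1 : R) else 0)
    fun i hi j hj hij => pow_injOn_Iio_orderOf (by simpa using hi) (by simpa using hj) hij,
    Finset.sum_ite_eq', Set.indicator_apply, SetLike.mem_coe, ht.mem_zpowers_iff_mem_range_orderOf]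
  congr

theorem mem_zpowers_of_commute_wreathPerm {H : Type*} [Group H] [DecidableEq H] {t s p q : H}
    {f : H → ZMod 3} (ht : IsOfFinOrder t) (hpq : q * p⁻¹ ∉ Subgroup.zpowers t)
    (hcomm : Commute (wreathPerm t (Pi.single p 1 - Pi.single q 1)) (wreathPerm s f)) :
    s ∈ Subgroup.zpowers t := by
  obtain ⟨hts, hcocycle⟩ := commute_wreathPerm_iff.1 hcomm
  have horbit : ∀ g, ∑ k ∈ Finset.range (orderOf t),
      (Pi.single p 1 - Pi.single q 1 : H → ZMod 3) (t ^ k * g) =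
      (Subgroup.zpowers t : Set H).indicator 1 (p * g⁻¹) -
        (Subgroup.zpowers t : Set H).indicator 1 (q * g⁻¹) := by
    intro g
    simp only [Pi.sub_apply, Finset.sum_sub_distrib,
      sum_range_orderOf_single_pow_mul_eq_indicator ht]
  have key := sum_range_orderOf_pow_mul_mul_eq hts hcocycle p
  rw [horbit, horbit, mul_inv_cancel, Set.indicator_of_mem (one_mem (Subgroup.zpowers t)),
    Pi.one_apply, Set.indicator_of_notMem hpq, mul_inv_rev, mul_inv_cancel_left] at key
  by_contra hs
  rw [Set.indicator_of_notMem ((Subgroup.inv_mem_iff _).not.2 hs)] at key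
  -- `key` now reads `0 - (0 or 1) = 1 - 0`, impossible in `ℤ/3`.
  rcases Set.indicator_eq_zero_or_self (Subgroup.zpowers t : Set H) (1 : H → ZMod 3)
    (q * (p⁻¹ * s⁻¹)) with hq | hq <;>
    simp only [hq, Pi.one_apply] at key <;> exact absurd key (by decide)

theorem notMem_zpowers_commutatorElement {H A : Type*} [Group H] [CommGroup A] (χ : H →* A)
    {a b : H} (hb : χ b ≠ 1) : b ∉ Subgroup.zpowers ⁅a, b⁆ := by
  rintro ⟨k, hk⟩
  apply hb
  rw [← hk, map_zpow, map_commutatorElement, commutatorElement_eq_one_iff_commute.2 (.all _ _),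
    one_zpow]

theorem FreeGroup.zpowersCentralizerCondition_commutatorElement {X : Type*} {x y : X}
    (hxy : x ≠ y) : ZPowersCentralizerCondition ⁅FreeGroup.of x, FreeGroup.of y⁆ := by
  classical
  intro N
  have : N.1.FiniteIndex := N.2.2
  let χ : FreeGroup X →* ℤˣ := FreeGroup.lift (Pi.mulSingle y (-1))
  let K : Subgroup (FreeGroup X) := N.1 ⊓ χ.ker
  let π : FreeGroup X →* FreeGroup X ⧸ K := QuotientGroup.mk' K
  set a := π (.of x)
  set b := π (.of y)
  let ψ := FreeGroup.lift fun t =>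
    wreathPerm (π (.of t)) ((Pi.single x (Pi.single 1 1) : X → _ → ZMod 3) t)
  refine ⟨⟨ψ.ker, inferInstance, inferInstance⟩, fun w hw => ?_⟩
  have hψc : ψ ⁅FreeGroup.of x, FreeGroup.of y⁆ =
      wreathPerm ⁅a, b⁆ (Pi.single (b * a * b⁻¹) 1 - Pi.single (b * a) 1) := by
    rw [map_commutatorElement, FreeGroup.lift_apply_of, FreeGroup.lift_apply_of,
      Pi.single_eq_same, Pi.single_eq_of_ne hxy.symm, commutatorElement_wreathPerm_single]
  obtain ⟨f, hf⟩ : ∃ f, ψ w = wreathPerm (π w) f := exists_lift_wreathPerm_eq _ _ w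
  have hcomm : Commute (ψ ⁅FreeGroup.of x, FreeGroup.of y⁆) (ψ w) := by
    rw [← commutatorElement_eq_one_iff_commute, ← map_commutatorElement]
    exact hw
  rw [hψc, hf] at hcomm
  have hb : b ∉ Subgroup.zpowers ⁅a, b⁆ := notMem_zpowers_commutatorElement
    (QuotientGroup.lift K χ inf_le_right) (by simp [b, π, χ])
  have hba : b * a * (b * a * b⁻¹)⁻¹ ∉ Subgroup.zpowers ⁅a, b⁆ := by
    rwa [show b * a * (b * a * b⁻¹)⁻¹ = b * ⁅a, b⁆ by group,
      Subgroup.mul_mem_cancel_right _ (Subgroup.mem_zpowers _)]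
  obtain ⟨k, hk⟩ := Subgroup.mem_zpowers_iff.1
    (mem_zpowers_of_commute_wreathPerm (isOfFinOrder_of_finite _) hba hcomm)
  refine ⟨k, ((QuotientGroup.eq (s := K)).1 ?_).1⟩
  rw [← QuotientGroup.mk'_apply, ← QuotientGroup.mk'_apply, map_zpow, map_commutatorElement]
  exact hk

theorem centralizer_of_commutator_general (X : Type) (x y : X) (hxy : x ≠ y) :
    Subgroup.centralizer
        {unit (FreeGroup X)
          (FreeGroup.of x * FreeGroup.of y * (FreeGroup.of x)⁻¹ * (FreeGroup.of y)⁻¹)}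
      = (Subgroup.zpowers
          (unit (FreeGroup X)
            (FreeGroup.of x * FreeGroup.of y * (FreeGroup.of x)⁻¹ *
              (FreeGroup.of y)⁻¹))).topologicalClosure := by
  rw [← commutatorElement_def]
  exact centralizer_unit_eq_closure_zpowers
    (FreeGroup.zpowersCentralizerCondition_commutatorElement hxy)

/-- Corollary 2.7: in the free profinite group `𝔉(X)` on a finite set `X` with
`|X| > 1`, the centralizer of the commutator `c = [x,y] = xyx⁻¹y⁻¹` of two distinct
free generators `x, y ∈ X` is the closure of the (pro)cyclic subgroup `⟨c⟩`. -/
theorem centralizer_of_commutator (X : Type) [Finite X] (hX : 1 < Nat.card X)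
    (x y : X) (hxy : x ≠ y) :
    Subgroup.centralizer
        {unit (FreeGroup X)
          (FreeGroup.of x * FreeGroup.of y * (FreeGroup.of x)⁻¹ * (FreeGroup.of y)⁻¹)}
      = (Subgroup.zpowers
          (unit (FreeGroup X)
            (FreeGroup.of x * FreeGroup.of y * (FreeGroup.of x)⁻¹ *
              (FreeGroup.of y)⁻¹))).topologicalClosure :=
  centralizer_of_commutator_general X x y hxy

end CSP
end

section
/- Let Ψ = ⟨z₁⟩ * ⟨z₂⟩ * ⟨z₃⟩ be the free product of three cyclic groups of order 2, and let ε : Ψ → ⟨z₁⟩ × ⟨z₂⟩ × ⟨z₃⟩ be the canonical (abelianization) homomorphism. Let F' = {g ∈ Ψ : ε(g) = (ε₁, ε₂, ε₃) with ε₁ = ε₂ = ε₃}. Then F' is the free group on the three elements u = z₁z₂z₃, v = z₂z₃z₁, and w = z₃z₁z₂. -/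
set_option linter.unusedVariables false

namespace CSP

/-- The free product `Ψ = ⟨z₁⟩ * ⟨z₂⟩ * ⟨z₃⟩` of three cyclic groups of order two. -/
abbrev Psi : Type := Monoid.CoprodI (fun _ : Fin 3 => Multiplicative (ZMod 2))

/-- The generator `zᵢ` of the `i`-th free factor of `Ψ`. -/
def z (i : Fin 3) : Psi :=
  Monoid.CoprodI.of (i := i) (Multiplicative.ofAdd (1 : ZMod 2))

/-- The canonical (abelianization) homomorphism `ε : Ψ → ⟨z₁⟩ × ⟨z₂⟩ × ⟨z₃⟩`. -/
def eps : Psi →* (∀ _ : Fin 3, Multiplicative (ZMod 2)) :=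
  Monoid.CoprodI.lift fun i =>
    MonoidHom.mulSingle (fun _ : Fin 3 => Multiplicative (ZMod 2)) i

/-- The "diagonal" subgroup of `⟨z₁⟩ × ⟨z₂⟩ × ⟨z₃⟩` of triples with all coordinates
equal. -/
def diagSubgroup : Subgroup (∀ _ : Fin 3, Multiplicative (ZMod 2)) where
  carrier := {p | p 0 = p 1 ∧ p 1 = p 2}
  one_mem' := ⟨rfl, rfl⟩
  mul_mem' := fun {a b} ha hb => by
    constructor
    · show a 0 * b 0 = a 1 * b 1
      rw [ha.1, hb.1]
    · show a 1 * b 1 = a 2 * b 2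
      rw [ha.2, hb.2]
  inv_mem' := fun {a} ha => by
    constructor
    · show (a 0)⁻¹ = (a 1)⁻¹
      rw [ha.1]
    · show (a 1)⁻¹ = (a 2)⁻¹
      rw [ha.2]

/-- The subgroup `F' = {g ∈ Ψ | ε(g) = (ε₁,ε₂,ε₃) with ε₁ = ε₂ = ε₃}`. -/
def Fprime : Subgroup Psi := Subgroup.comap eps diagSubgroup

/-!
`F'` is the preimage of the diagonal of `(ℤ/2)³`, a subgroup of index 4 in `(ℤ/2)³`, so `F'` has
index 4 in `Ψ` with transversal `{1, z₁, z₂, z₃}`. If `F'` were free on `u, v, w`, every element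
of `Ψ` would be `t · x` with `t` in the transversal and `x` a word in `u, v, w`, and left
multiplication by `zᵢ` would rewrite `(t, x)` by explicit rules such as `z₂ · z₁ = z₃ · u⁻¹`.
These rules define an involution of `{1, z₁, z₂, z₃} × F₃` for each `i`, hence an action of `Ψ`,
and the evaluation map `(t, x) ↦ t · x` is equivariant for it. Equivariance makes evaluation
surjective, which together with `zᵢ ∉ F'` gives `F' ⊆ ⟨u, v, w⟩`; and a word `x` in `u, v, w`
sends `(1, 1)` to `(1, x)`, so it acts trivially only if `x = 1`, which gives injectivity.
-/

def zmodPowersHom {M : Type*} [Monoid M] {n : ℕ} [NeZero n] (g : M) (hg : g ^ n = 1) :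
    Multiplicative (ZMod n) →* M where
  toFun m := g ^ m.toAdd.val
  map_one' := by rw [toAdd_one, ZMod.val_zero, pow_zero]
  map_mul' a b := by rw [toAdd_mul, ZMod.val_add, ← pow_eq_pow_mod _ hg, pow_add]

theorem zmodPowersHom_ofAdd_one {M : Type*} [Monoid M] {n : ℕ} [Fact (1 < n)] (g : M)
    (hg : g ^ n = 1) : zmodPowersHom g hg (Multiplicative.ofAdd 1) = g := by
  simp [zmodPowersHom, ZMod.val_one]

theorem z_mul_self (i : Fin 3) : z i * z i = 1 := by
  rw [z, ← map_mul, ← ofAdd_add, show (1 + 1 : ZMod 2) = 0 from rfl, ofAdd_zero, map_one]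

theorem z_inv (i : Fin 3) : (z i)⁻¹ = z i := inv_eq_of_mul_eq_one_right (z_mul_self i)

@[simp]
theorem z_mul_z_mul (i : Fin 3) (g : Psi) : z i * (z i * g) = g := by
  rw [← mul_assoc, z_mul_self, one_mul]

theorem of_eq_one_or_eq_z (i : Fin 3) (m : Multiplicative (ZMod 2)) :
    (Monoid.CoprodI.of (i := i) m : Psi) = 1 ∨ (Monoid.CoprodI.of (i := i) m : Psi) = z i := by
  obtain rfl | rfl : m = 1 ∨ m = Multiplicative.ofAdd 1 := by revert m; decide
  exacts [.inl (map_one _), .inr rfl]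

@[elab_as_elim]
theorem induction_z {motive : Psi → Prop} (g : Psi) (one : motive 1)
    (z_mul : ∀ i g, motive g → motive (z i * g)) : motive g := by
  induction g using Monoid.CoprodI.induction_left with
  | one => exact one
  | @mul i m g hg =>
    rcases of_eq_one_or_eq_z i m with h | h
    · rwa [h, one_mul]
    · rw [h]
      exact z_mul i g hg

theorem mem_diagSubgroup (p : ∀ _ : Fin 3, Multiplicative (ZMod 2)) :
    p ∈ diagSubgroup ↔ p 0 = p 1 ∧ p 1 = p 2 :=
  Iff.rfl

theorem eps_z (i : Fin 3) : eps (z i) = Pi.mulSingle i (Multiplicative.ofAdd 1) := by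
  rw [eps, z, Monoid.CoprodI.lift_of, MonoidHom.mulSingle_apply]

theorem z_notMem_Fprime (i : Fin 3) : z i ∉ Fprime := by
  rw [Fprime, Subgroup.mem_comap, eps_z, mem_diagSubgroup]
  revert i
  decide

/-- `uvw 0, uvw 1, uvw 2` are the paper's `u, v, w`, with 0-based indices taken mod 3. -/
def uvw (j : Fin 3) : Psi := z j * z (j + 1) * z (j + 2)

theorem uvw_eq : uvw = ![z 0 * z 1 * z 2, z 1 * z 2 * z 0, z 2 * z 0 * z 1] := by
  funext j
  fin_cases j <;> rfl

theorem uvw_mem_Fprime (j : Fin 3) : uvw j ∈ Fprime := by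
  rw [Fprime, Subgroup.mem_comap, uvw, map_mul, map_mul, eps_z, eps_z, eps_z, mem_diagSubgroup]
  revert j
  decide

theorem range_lift_uvw_le_Fprime : (FreeGroup.lift uvw).range ≤ Fprime := by
  rw [FreeGroup.range_lift_eq_closure, Subgroup.closure_le]
  rintro _ ⟨j, rfl⟩
  exact uvw_mem_Fprime j

/-- A pair `(t, x)` stands for `t · x` with `t ∈ {1, z₀, z₁, z₂}` (`none` standing for `1`)
and `x` a word in `u, v, w`. -/
abbrev NormalForm : Type := Option (Fin 3) × FreeGroup (Fin 3)

/-- Left multiplication by `zᵢ`, rewritten using `zᵢ zᵢ = 1`, `z_{j+1} z_j = z_{j+2} · uvw_j⁻¹`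
and `z_{j+2} z_j = z_{j+1} · uvw_{j+1}`. -/
def reflect (i : Fin 3) : NormalForm → NormalForm
  | (none, x) => (some i, x)
  | (some j, x) =>
    if j = i then (none, x)
    else if i = j + 1 then (some (j + 2), (FreeGroup.of j)⁻¹ * x)
    else (some (j + 1), FreeGroup.of (j + 1) * x)

theorem reflect_involutive (i : Fin 3) : Function.Involutive (reflect i) := by
  rintro ⟨_ | j, x⟩
  · simp [reflect]
  · fin_cases i <;> fin_cases j <;> simp [reflect]

def act : Psi →* Equiv.Perm NormalForm :=
  Monoid.CoprodI.lift fun i =>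
    zmodPowersHom (reflect_involutive i).toPerm (by rw [sq]; exact Equiv.ext (reflect_involutive i))

theorem act_z (i : Fin 3) (p : NormalForm) : act (z i) p = reflect i p := by
  rw [act, z, Monoid.CoprodI.lift_of, zmodPowersHom_ofAdd_one]
  rfl

def eval (p : NormalForm) : Psi := p.1.elim 1 z * FreeGroup.lift uvw p.2

theorem eq_add_one_or_eq_add_two_of_ne {i j : Fin 3} (h : j ≠ i) : i = j + 1 ∨ i = j + 2 := by
  revert i j; decide

theorem eval_reflect (i : Fin 3) (p : NormalForm) : eval (reflect i p) = z i * eval p := by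
  obtain ⟨_ | j, x⟩ := p
  · simp [reflect, eval]
  by_cases hji : j = i
  · subst hji
    simp [reflect, eval]
  rcases eq_add_one_or_eq_add_two_of_ne hji with rfl | rfl
  · simp [reflect, eval, uvw, mul_inv_rev, z_inv, mul_assoc]
  · have h₁ : j + 2 ≠ j + 1 := by revert j; decide
    have h₂ : j + 1 + 1 = j + 2 := by revert j; decide
    have h₃ : j + 1 + 2 = j := by revert j; decide
    simp [reflect, eval, hji, h₁, h₂, h₃, uvw, mul_assoc]

theorem eval_act (g : Psi) (p : NormalForm) : eval (act g p) = g * eval p := by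
  induction g using induction_z generalizing p with
  | one => simp
  | z_mul i g hg => rw [map_mul, Equiv.Perm.mul_apply, act_z, eval_reflect, hg, mul_assoc]

theorem eval_surjective : Function.Surjective eval :=
  fun g => ⟨act g (none, 1), by rw [eval_act]; simp [eval]⟩

theorem act_lift_uvw_none (x w : FreeGroup (Fin 3)) :
    act (FreeGroup.lift uvw x) (none, w) = (none, x * w) := by
  induction x using FreeGroup.induction_on generalizing w with
  | C1 => simp
  | of j =>
    have h₁ : j + 2 ≠ j + 1 := by revert j; decide
    have h₂ : j + 2 + 1 = j := by revert j; decide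
    simp [uvw, act_z, reflect, h₁, h₂]
  | inv_of j hj =>
    rw [map_inv, map_inv, Equiv.Perm.inv_eq_iff_eq, hj, mul_inv_cancel_left]
  | mul x y hx hy => rw [map_mul, map_mul, Equiv.Perm.mul_apply, hy, hx, mul_assoc]

theorem eval_mem_Fprime_iff (p : NormalForm) : eval p ∈ Fprime ↔ p.1 = none := by
  obtain ⟨_ | j, x⟩ := p
  · simpa [eval] using range_lift_uvw_le_Fprime ⟨x, rfl⟩
  · simpa [eval, Subgroup.mul_mem_cancel_right _ (range_lift_uvw_le_Fprime ⟨x, rfl⟩)] using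
      z_notMem_Fprime j

/-- Lemma 4.2: `F'` is the free group on the three elements `u = z₁z₂z₃`,
`v = z₂z₃z₁` and `w = z₃z₁z₂`; i.e. the homomorphism from the free group on three
generators determined by these elements is injective with image exactly `F'`. -/
theorem Fprime_free_on_uvw :
    Function.Injective
      (FreeGroup.lift ![z 0 * z 1 * z 2, z 1 * z 2 * z 0, z 2 * z 0 * z 1] :
        FreeGroup (Fin 3) →* Psi) ∧
    (FreeGroup.lift ![z 0 * z 1 * z 2, z 1 * z 2 * z 0, z 2 * z 0 * z 1] :
        FreeGroup (Fin 3) →* Psi).range = Fprime := by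
  rw [← uvw_eq]
  refine ⟨(injective_iff_map_eq_one _).2 fun x hx => ?_,
    le_antisymm range_lift_uvw_le_Fprime fun g hg => ?_⟩
  · simpa [hx, eq_comm] using act_lift_uvw_none x 1
  · obtain ⟨⟨_ | j, x⟩, rfl⟩ := eval_surjective g
    · exact ⟨x, (one_mul _).symm⟩
    · exact absurd ((eval_mem_Fprime_iff _).1 hg) (Option.some_ne_none j)

end CSP
end
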